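/- arXiv:1612.09305 — 4 statements merged into one kernel-verified Lean document; each statement's English description precedes it below -/
import Mathlib

section
/- Let C be a class of procedures with risk r : Θ × C → ℝ≥0. Suppose that for every δ ∈ C, every sequence δ₁, δ₂, … in C, and every nondecreasing sequence ε₁ ≤ ε₂ ≤ ⋯ of positive reals with limit ε₀ such that δ is εᵢ-dominated by δᵢ for all i, there exists δ₀ ∈ C such that δ is ε₀-dominated by δ₀. Then the set of procedures in C that are extended admissible relative to C forms a complete subclass of C: every δ ∈ C that is not extended admissible is dominated by some extended admissible element of C. -/
/-- `δ` is ε-dominated by `δ'` for the risk function `r`. -/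
def EpsDominatedBy {Θ C : Type*} (r : Θ → C → ℝ) (ε : ℝ) (δ δ' : C) : Prop :=
  (∀ θ, r θ δ' ≤ r θ δ - ε) ∧ ∃ θ, r θ δ' ≠ r θ δ

/-- `δ` is extended admissible relative to the class `C`. -/
def ExtAdmissible {Θ C : Type*} (r : Θ → C → ℝ) (δ : C) : Prop :=
  ∀ ε : ℝ, 0 < ε → ¬ ∃ δ' : C, EpsDominatedBy r ε δ δ'

private lemma epsDom_mono {Θ C : Type*} (r : Θ → C → ℝ) {ε ε' : ℝ} {δ δ' : C}
    (h : EpsDominatedBy r ε δ δ') (hle : ε' ≤ ε) : EpsDominatedBy r ε' δ δ' :=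
  ⟨fun θ => (h.1 θ).trans (by linarith), h.2⟩

/-- If, whenever `δ` is `εᵢ`-dominated by `δᵢ` along a nondecreasing
sequence of positive levels `εᵢ → ε₀`, some `δ₀ ∈ C` `ε₀`-dominates `δ`, then the
extended admissible procedures form a complete subclass of `C`. -/
theorem extAdmissible_complete_class
    {Θ C : Type*}
    (r : Θ → C → ℝ)
    (hr_nonneg : ∀ θ δ, 0 ≤ r θ δ)
    (hclosed : ∀ (δ : C) (δseq : ℕ → C) (εseq : ℕ → ℝ) (ε₀ : ℝ),
      Monotone εseq → (∀ i, 0 < εseq i) →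
      Filter.Tendsto εseq Filter.atTop (nhds ε₀) →
      (∀ i, EpsDominatedBy r (εseq i) δ (δseq i)) →
      ∃ δ₀ : C, EpsDominatedBy r ε₀ δ δ₀) :
    ∀ δ : C, ¬ ExtAdmissible r δ →
      ∃ δ' : C, ExtAdmissible r δ' ∧ EpsDominatedBy r 0 δ δ' := by
  intro δ hδ
  rw [ExtAdmissible] at hδ
  push_neg at hδ
  obtain ⟨ε₁, hε₁, δ₁, hδ₁⟩ := hδ
  obtain ⟨θ₀, -⟩ := hδ₁.2
  set S : Set ℝ := {ε : ℝ | 0 < ε ∧ ∃ δ', EpsDominatedBy r ε δ δ'} with hS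
  have hSne : S.Nonempty := ⟨ε₁, hε₁, δ₁, hδ₁⟩
  have hSbdd : BddAbove S := by
    refine ⟨r θ₀ δ, fun ε hε => ?_⟩
    obtain ⟨hpos, δ', h1, -⟩ := hε
    have := h1 θ₀
    have := hr_nonneg θ₀ δ'
    linarith
  set ε₀ : ℝ := sSup S with hε₀
  have hε₀pos : 0 < ε₀ := lt_of_lt_of_le hε₁ (le_csSup hSbdd ⟨hε₁, δ₁, hδ₁⟩)
  set εseq : ℕ → ℝ := fun i => ε₀ - ε₀ / (i + 2) with hεseq
  have hεlt : ∀ i, εseq i < ε₀ := by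
    intro i
    have : (0:ℝ) < ε₀ / (i + 2) := by positivity
    simp only [hεseq]; linarith
  have hεpos : ∀ i, 0 < εseq i := by
    intro i
    have h2 : (2:ℝ) ≤ (i:ℝ) + 2 := by have : (0:ℝ) ≤ i := Nat.cast_nonneg i; linarith
    have : ε₀ / ((i:ℝ) + 2) ≤ ε₀ / 2 := by
      apply div_le_div_of_nonneg_left hε₀pos.le (by norm_num) h2
    simp only [hεseq]; linarith
  have hmono : Monotone εseq := by
    intro i j hij
    simp only [hεseq]
    have h1 : (0:ℝ) < (i:ℝ) + 2 := by positivity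
    have : ε₀ / ((j:ℝ) + 2) ≤ ε₀ / ((i:ℝ) + 2) := by
      apply div_le_div_of_nonneg_left hε₀pos.le h1
      have : (i:ℝ) ≤ j := Nat.cast_le.mpr hij
      linarith
    linarith
  have htend : Filter.Tendsto εseq Filter.atTop (nhds ε₀) := by
    have h0 : Filter.Tendsto (fun i : ℕ => ε₀ / ((i:ℝ) + 2)) Filter.atTop (nhds 0) := by
      have hs : Filter.Tendsto (fun i : ℕ => (i:ℝ) + 2) Filter.atTop Filter.atTop :=
        Filter.tendsto_atTop_add_const_right _ 2 tendsto_natCast_atTop_atTop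
      exact Filter.Tendsto.div_atTop tendsto_const_nhds hs
    have := (tendsto_const_nhds (x := ε₀) (f := Filter.atTop (α := ℕ))).sub h0
    simpa using this
  have hdom : ∀ i, ∃ d, EpsDominatedBy r (εseq i) δ d := by
    intro i
    obtain ⟨ε, hεS, hlt⟩ := exists_lt_of_lt_csSup hSne (hεlt i)
    exact ⟨hεS.2.choose, epsDom_mono r hεS.2.choose_spec hlt.le⟩
  choose δseq hδseq using hdom
  obtain ⟨δ₀, hδ₀⟩ := hclosed δ δseq εseq ε₀ hmono hεpos htend hδseq
  refine ⟨δ₀, ?_, epsDom_mono r hδ₀ hε₀pos.le⟩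
  intro ε hε ⟨δ'', h1, h2⟩
  have hnew : EpsDominatedBy r (ε₀ + ε) δ δ'' := by
    refine ⟨fun θ => ?_, ⟨θ₀, ?_⟩⟩
    · have := h1 θ; have := hδ₀.1 θ; linarith
    · have := h1 θ₀; have := hδ₀.1 θ₀; intro heq; linarith
  have : ε₀ + ε ≤ ε₀ := le_csSup hSbdd ⟨by linarith, δ'', hnew⟩
  linarith
end

section
/- Let Δ be an internal decision procedure that is nonstandard Bayes with respect to a nonstandard prior Π relative to a class C of internal procedures. If Δ is *dominated on *Θ by some Δ' ∈ C (i.e., *r(θ,Δ') ≤ *r(θ,Δ) for all θ ∈ *Θ, with *r(θ₀,Δ') ≉ *r(θ₀,Δ) for some θ₀), then Δ' is also nonstandard Bayes with respect to Π relative to C. Consequently, if every Δ' ∈ C that is nonstandard Bayes with respect to Π has *r(θ,Δ') ≈ *r(θ,Δ) for all θ ∈ *Θ, then Δ is *admissible on *Θ relative to C. -/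
/-- `Δ` is nonstandard Bayes with respect to the internal prior (represented by its
internal Bayes-risk functional `B`) relative to the class `C`: its internal Bayes
risk is hyperfinite and at most infinitesimally larger than that of any member of `C`. -/
def NSBayesWrt {P : Type*} (B : P → Hyperreal) (C : Set P) (Δ : P) : Prop :=
  ¬ Hyperreal.Infinite (B Δ) ∧
  ∃ i : Hyperreal, Hyperreal.Infinitesimal i ∧ 0 ≤ i ∧ ∀ Δ' ∈ C, B Δ ≤ B Δ' + i

/-- if `Δ` is nonstandard Bayes with respect to `Π` relative to `C`
and `Δ` is *dominated on `*Θ` by some `Δ' ∈ C`, then `Δ'` is also nonstandard Bayes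
with respect to `Π`; consequently, if every nonstandard Bayes member of `C` has risk
infinitesimally equal to that of `Δ` everywhere, then `Δ` is *admissible on `*Θ`.
`rS` is the internal risk function (nonnegative hyperreal valued) and `B` the
internal Bayes-risk functional of the prior `Π`, which is monotone with respect to
pointwise risk comparison. -/
theorem nsBayes_dominated
    {ΘS P : Type*} (rS : ΘS → P → Hyperreal)
    (hr_nonneg : ∀ θ Δ, 0 ≤ rS θ Δ)
    (C : Set P) (B : P → Hyperreal)
    (hmono : ∀ p q : P, (∀ θ, rS θ p ≤ rS θ q) → B p ≤ B q)
    (Δ : P) (hB : NSBayesWrt B C Δ) :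
    (∀ Δ' ∈ C,
      ((∀ θ, rS θ Δ' ≤ rS θ Δ) ∧
        ∃ θ₀, ¬ Hyperreal.Infinitesimal (rS θ₀ Δ' - rS θ₀ Δ)) →
      NSBayesWrt B C Δ') ∧
    ((∀ Δ' ∈ C, NSBayesWrt B C Δ' →
        ∀ θ, Hyperreal.Infinitesimal (rS θ Δ' - rS θ Δ)) →
      ¬ ∃ Δ' ∈ C, (∀ θ, rS θ Δ' ≤ rS θ Δ) ∧
        ∃ θ₀, ¬ Hyperreal.Infinitesimal (rS θ₀ Δ' - rS θ₀ Δ)) := by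
  obtain ⟨hfin, i, hi_inf, hi_nonneg, hi⟩ := hB
  have key : ∀ Δ' ∈ C, (∀ θ, rS θ Δ' ≤ rS θ Δ) → NSBayesWrt B C Δ' := by
    intro Δ' hΔ'C hle
    have hBle : B Δ' ≤ B Δ := hmono _ _ hle
    have hlow : B Δ - i ≤ B Δ' := by
      have := hi Δ' hΔ'C
      linarith
    constructor
    · rintro (hpos | hneg)
      · exact hfin (Or.inl fun r => lt_of_lt_of_le (hpos r) hBle)
      · refine hfin (Or.inr fun r => ?_)
        have h1 : i < 1 := by
          have := (Hyperreal.infinitesimal_def.mp hi_inf) 1 one_pos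
          exact this.2
        have := hi Δ' hΔ'C
        have h2 : B Δ' < (r : Hyperreal) - 1 := hneg (r - 1)
        push_cast at h2 ⊢
        linarith
    · exact ⟨i, hi_inf, hi_nonneg, fun Δ'' hΔ'' => le_trans hBle (hi Δ'' hΔ'')⟩
  refine ⟨fun Δ' hΔ' h => key Δ' hΔ' h.1, ?_⟩
  rintro H ⟨Δ', hΔ'C, hle, θ₀, hθ₀⟩
  exact hθ₀ (H Δ' hΔ'C (key Δ' hΔ'C hle) θ₀)
end

section
/- Suppose Δ₀ is an internal procedure that is nonstandard Bayes relative to a class C of internal procedures. Then Δ₀ is *extended admissible on *Θ relative to C: for every standard ε > 0, there is no Δ ∈ C with *r(θ,Δ) ≤ *r(θ,Δ₀) − ε for all θ ∈ *Θ. -/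
/-- a procedure `Δ₀` that is nonstandard Bayes relative to `C`
(with respect to some internal prior, represented by its internal Bayes-risk
functional `B`, which is monotone/linear so that a uniform risk gap of a standard
`c` translates into a Bayes-risk gap of `c`) is *extended admissible on `*Θ`
relative to `C`: for every standard `ε > 0` no `Δ ∈ C` satisfies
`*r(θ,Δ) ≤ *r(θ,Δ₀) − ε` for all `θ ∈ *Θ`. -/
theorem nsBayes_implies_starExtendedAdmissible
    {ΘS P : Type*} (rS : ΘS → P → Hyperreal)
    (hr_nonneg : ∀ θ Δ, 0 ≤ rS θ Δ)
    (C : Set P) (Δ₀ : P)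
    (B : P → Hyperreal)
    (hmono : ∀ (p q : P) (c : ℝ),
      (∀ θ, rS θ p ≤ rS θ q - (c : Hyperreal)) → B p ≤ B q - (c : Hyperreal))
    (hfin : ¬ Hyperreal.Infinite (B Δ₀))
    (hbayes : ∃ i : Hyperreal, Hyperreal.Infinitesimal i ∧ 0 ≤ i ∧
      ∀ Δ ∈ C, B Δ₀ ≤ B Δ + i) :
    ∀ ε : ℝ, 0 < ε →
      ¬ ∃ Δ ∈ C, ∀ θ : ΘS, rS θ Δ ≤ rS θ Δ₀ - (ε : Hyperreal) := by
  rintro ε hε ⟨Δ, hΔC, hgap⟩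
  obtain ⟨i, hi, hi0, hB⟩ := hbayes
  have h1 : B Δ ≤ B Δ₀ - (ε : Hyperreal) := hmono Δ Δ₀ ε hgap
  have h2 : B Δ₀ ≤ B Δ + i := hB Δ hΔC
  have h3 : (ε : Hyperreal) ≤ i := by linarith
  have h4 : i < (ε : Hyperreal) := by simpa using (hi ε hε).2
  exact absurd h3 (not_le.mpr h4)
end

section
/- In the Bernoulli decision problem with X = {0,1}, Θ = [0,1], g(x) = x for x > 0 and g(0) = 1, model P_t = Bernoulli(g(t)), loss ℓ(x,y) = (g(x) − y)², and nonrandomized procedures identified with pairs (a,b) ∈ [0,1]² with risk r(t,(a,b)) = (1 − g(t))·(g(t) − a)² + g(t)·(g(t) − b)², the procedure (0,0) is admissible: no (a,b) ∈ [0,1]² satisfies r(t,(a,b)) ≤ r(t,(0,0)) for all t ∈ [0,1] with strict inequality at some t. -/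
open scoped BigOperators

noncomputable section

/-- The map `g` of the Bernoulli example: `g x = x` for `x > 0` and `g 0 = 1`. -/
def bernG (x : ℝ) : ℝ := if 0 < x then x else 1

/-- Risk of the nonrandomized procedure `(a,b)` at parameter `t` in the Bernoulli
example with model `P_t = Bernoulli (g t)` and loss `ℓ(x,y) = (g x − y)²`. -/
def bernRisk (t a b : ℝ) : ℝ :=
  (1 - bernG t) * (bernG t - a) ^ 2 + bernG t * (bernG t - b) ^ 2

/-- In the Bernoulli decision problem, the procedure `(0,0)` is
admissible: no `(a,b) ∈ [0,1]²` weakly dominates it everywhere with strict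
inequality somewhere. -/
theorem bernoulli_zero_zero_admissible :
    ¬ ∃ a ∈ Set.Icc (0 : ℝ) 1, ∃ b ∈ Set.Icc (0 : ℝ) 1,
      (∀ t ∈ Set.Icc (0 : ℝ) 1, bernRisk t a b ≤ bernRisk t 0 0) ∧
      ∃ t ∈ Set.Icc (0 : ℝ) 1, bernRisk t a b < bernRisk t 0 0 := by
  rintro ⟨a, ha, b, hb, hall, t, ht, hstrict⟩
  have ha0 : a = 0 := by
    by_contra h
    have hapos : 0 < a := lt_of_le_of_ne ha.1 (Ne.symm h)
    have ht4 : (a/4) ∈ Set.Icc (0:ℝ) 1 := ⟨by linarith, by linarith [ha.2]⟩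
    have hle := hall (a/4) ht4
    have hg : bernG (a/4) = a/4 := if_pos (by linarith)
    simp only [bernRisk, hg] at hle
    nlinarith [sq_nonneg (a/4 - b), sq_nonneg a, hb.1, hb.2, ha.2]
  have hb0 : b = 0 := by
    by_contra h
    have hbpos : 0 < b := lt_of_le_of_ne hb.1 (Ne.symm h)
    have ht4 : (b/4) ∈ Set.Icc (0:ℝ) 1 := ⟨by linarith, by linarith [hb.2]⟩
    have hle := hall (b/4) ht4
    have hg : bernG (b/4) = b/4 := if_pos (by linarith)
    simp only [bernRisk, hg, ha0] at hle
    nlinarith [mul_pos hbpos (mul_pos hbpos hbpos)]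
  rw [ha0, hb0] at hstrict
  exact lt_irrefl _ hstrict

end
end
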